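/- In the strongly convex RDA setting (β_t = 0), the cumulative stability satisfies Σ_{t=1}^T ‖w_t − w_{t+1}‖ ≤ (2L/α)(1 + ln T), and combined with zero forward regret of the follow-the-leader scheme on losses w ↦ ⟨g_t,w⟩ + r(w), the regret satisfies Σ_{t=1}^T [⟨g_t, w_t − w*⟩ + r(w_t) − r(w*)] ≤ (2L²/α)(1 + ln T). -/

import Mathlib

/-!
Dividing the `t`-th RDA objective by `t` shows that `w (t + 1)` minimizes `r + ⟪ḡₜ, ·⟫`, where
`ḡₜ` is the running average of the gradients. Two minimizers of an `α`-strongly convex function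
perturbed by linear terms `⟪v, ·⟫` and `⟪v', ·⟫` are within `‖v - v'‖ / α` of each other, and
`‖ḡₜ - ḡₜ₋₁‖ ≤ 2L / t`, so the stability sum is bounded by `2L / α` times a harmonic sum.

RDA is follow-the-leader on the losses `fₜ = ⟪gₜ, ·⟫ + r`, so by the be-the-leader argument its
regret is at most `∑ (fₜ wₜ - fₜ wₜ₊₁)`; the `r`-terms telescope to `r w₁ - r w_{T+1} ≤ 0`, and
the linear terms are at most `L ‖wₜ - wₜ₊₁‖`.
-/

open Finset Filter Topology
open scoped RealInnerProductSpace

section StrongConvexity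

variable {E : Type*} [NormedAddCommGroup E] [InnerProductSpace ℝ E] {C : Set E} {m : ℝ}
  {f : E → ℝ}

lemma StrongConvexOn.add_inner (hf : StrongConvexOn C m f) (v : E) :
    StrongConvexOn C m (fun u => f u + ⟪v, u⟫) := by
  have hlin : ConvexOn ℝ C (fun u => ⟪v, u⟫) := (innerₛₗ ℝ v).convexOn hf.1
  have hsum := hf.add (uniformConvexOn_zero.2 hlin)
  rwa [add_zero] at hsum

/-- Comparing `f` at `a` with `f` at the points `(1 - b) • u + b • a` and letting `b → 1`. -/
lemma StrongConvexOn.add_sq_norm_sub_le_of_isMinOn (hf : StrongConvexOn C m f) {a u : E}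
    (ha : a ∈ C) (hu : u ∈ C) (hmin : IsMinOn f C a) :
    f a + m / 2 * ‖u - a‖ ^ 2 ≤ f u := by
  set c := m / 2 * ‖u - a‖ ^ 2
  have hseg : ∀ b ∈ Set.Ioo (0 : ℝ) 1, f a + b * c ≤ f u := by
    rintro b ⟨hb0, hb1⟩
    have hconv := hf.2 hu ha (sub_pos.2 hb1).le hb0.le (by ring)
    have hle := isMinOn_iff.1 hmin _ (hf.1 hu ha (sub_pos.2 hb1).le hb0.le (by ring))
    simp only [smul_eq_mul] at hconv
    have hscaled : (1 - b) * (f a + b * c) ≤ (1 - b) * f u := by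
      linear_combination hle.trans hconv
    exact le_of_mul_le_mul_left hscaled (sub_pos.2 hb1)
  have hlim : Tendsto (fun b : ℝ => f a + b * c) (𝓝[<] 1) (𝓝 (f a + 1 * c)) :=
    ((continuous_const.add (continuous_id.mul continuous_const)).tendsto 1).mono_left
      nhdsWithin_le_nhds
  rw [one_mul] at hlim
  exact le_of_tendsto hlim (eventually_of_mem (Ioo_mem_nhdsLT one_pos) hseg)

lemma StrongConvexOn.mul_norm_sub_le_of_isMinOn_add_inner (hf : StrongConvexOn C m f)
    {a b v v' : E} (ha : a ∈ C) (hb : b ∈ C)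
    (hav : IsMinOn (fun u => f u + ⟪v, u⟫) C a) (hbv : IsMinOn (fun u => f u + ⟪v', u⟫) C b) :
    m * ‖a - b‖ ≤ ‖v - v'‖ := by
  have hgrow_a := (hf.add_inner v).add_sq_norm_sub_le_of_isMinOn ha hb hav
  have hgrow_b := (hf.add_inner v').add_sq_norm_sub_le_of_isMinOn hb ha hbv
  have hcs : ⟪v - v', b - a⟫ ≤ ‖v - v'‖ * ‖a - b‖ := by
    rw [norm_sub_rev a b]
    exact real_inner_le_norm _ _
  have hsq : m * ‖a - b‖ ^ 2 ≤ ‖v - v'‖ * ‖a - b‖ := by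
    simp only [inner_sub_left, inner_sub_right, norm_sub_rev b a] at hgrow_a hgrow_b hcs
    linarith
  rcases (norm_nonneg (a - b)).eq_or_lt with h0 | hpos
  · rw [← h0, mul_zero]
    exact norm_nonneg _
  · exact le_of_mul_le_mul_right (by rwa [mul_assoc, ← sq]) hpos

end StrongConvexity

section RunningAverage

variable {E : Type*} [NormedAddCommGroup E] [NormedSpace ℝ E] {g : ℕ → E} {L : ℝ}

noncomputable def runningAverage (g : ℕ → E) (t : ℕ) : E :=
  (t : ℝ)⁻¹ • ∑ τ ∈ Icc 1 t, g τ

lemma natCast_smul_runningAverage (g : ℕ → E) (t : ℕ) :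
    (t : ℝ) • runningAverage g t = ∑ τ ∈ Icc 1 t, g τ := by
  rcases Nat.eq_zero_or_pos t with rfl | ht
  · simp
  · rw [runningAverage, smul_inv_smul₀ (by positivity)]

lemma add_one_smul_runningAverage_succ_sub (g : ℕ → E) (t : ℕ) :
    ((t : ℝ) + 1) • (runningAverage g (t + 1) - runningAverage g t) =
      g (t + 1) - runningAverage g t := by
  have hsucc := natCast_smul_runningAverage g (t + 1)
  rw [sum_Icc_succ_top (by omega), ← natCast_smul_runningAverage g t] at hsucc
  push_cast at hsucc
  rw [smul_sub, hsucc, add_smul, one_smul]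
  abel

lemma norm_runningAverage_le (hg : ∀ τ, ‖g τ‖ ≤ L) (t : ℕ) : ‖runningAverage g t‖ ≤ L := by
  rcases Nat.eq_zero_or_pos t with rfl | ht
  · simpa [runningAverage] using (norm_nonneg _).trans (hg 0)
  have htR : (0 : ℝ) < t := by exact_mod_cast ht
  have hsum : ‖∑ τ ∈ Icc 1 t, g τ‖ ≤ t * L := by
    calc ‖∑ τ ∈ Icc 1 t, g τ‖ ≤ ∑ τ ∈ Icc 1 t, ‖g τ‖ := norm_sum_le _ _
      _ ≤ ∑ _τ ∈ Icc 1 t, L := sum_le_sum fun τ _ => hg τ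
      _ = t * L := by simp
  rw [runningAverage, norm_smul, norm_inv, Real.norm_natCast, inv_mul_le_iff₀ htR]
  exact hsum

lemma norm_runningAverage_succ_sub_le (hg : ∀ τ, ‖g τ‖ ≤ L) (t : ℕ) :
    ‖runningAverage g (t + 1) - runningAverage g t‖ ≤ 2 * L / (t + 1) := by
  have hnorm := congrArg norm (add_one_smul_runningAverage_succ_sub g t)
  rw [norm_smul, Real.norm_of_nonneg (by positivity)] at hnorm
  rw [le_div_iff₀' (by positivity), hnorm, two_mul]
  exact (norm_sub_le _ _).trans (add_le_add (hg _) (norm_runningAverage_le hg t))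

end RunningAverage

lemma sum_apply_succ_le_sum_apply_of_isMinOn {X : Type*} {C : Set X} {f : ℕ → X → ℝ}
    {w : ℕ → X} (hw : ∀ t, w t ∈ C)
    (hmin : ∀ t, 1 ≤ t → IsMinOn (fun u => ∑ τ ∈ Icc 1 t, f τ u) C (w (t + 1)))
    (n : ℕ) {u : X} (hu : u ∈ C) :
    ∑ t ∈ Icc 1 n, f t (w (t + 1)) ≤ ∑ t ∈ Icc 1 n, f t u := by
  induction n generalizing u with
  | zero => simp
  | succ n ih =>
    calc ∑ t ∈ Icc 1 (n + 1), f t (w (t + 1))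
        = ∑ t ∈ Icc 1 n, f t (w (t + 1)) + f (n + 1) (w (n + 2)) :=
          sum_Icc_succ_top (by omega) _
      _ ≤ ∑ t ∈ Icc 1 n, f t (w (n + 2)) + f (n + 1) (w (n + 2)) :=
          add_le_add_left (ih (hw _)) _
      _ = ∑ t ∈ Icc 1 (n + 1), f t (w (n + 2)) := (sum_Icc_succ_top (by omega) _).symm
      _ ≤ ∑ t ∈ Icc 1 (n + 1), f t u := isMinOn_iff.1 (hmin (n + 1) (by omega)) u hu

section RDA

variable {E : Type*} [NormedAddCommGroup E] [InnerProductSpace ℝ E]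

structure IsRDASequence (C : Set E) (r : E → ℝ) (g : ℕ → E) (w : ℕ → E) : Prop where
  mem : ∀ t, w t ∈ C
  isMinOn_one : IsMinOn r C (w 1)
  isMinOn_succ : ∀ t, 1 ≤ t →
    IsMinOn (fun u => ∑ τ ∈ Icc 1 t, ⟪g τ, u⟫ + t * r u) C (w (t + 1))

namespace IsRDASequence

variable {C : Set E} {r : E → ℝ} {g w : ℕ → E} {α L : ℝ}

lemma isMinOn_add_inner_runningAverage (hw : IsRDASequence C r g w) (t : ℕ) :
    IsMinOn (fun u => r u + ⟪runningAverage g t, u⟫) C (w (t + 1)) := by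
  rcases Nat.eq_zero_or_pos t with rfl | ht
  · simpa [runningAverage] using hw.isMinOn_one
  refine isMinOn_iff.2 fun u hu => ?_
  have hobj : ∀ x, ∑ τ ∈ Icc 1 t, ⟪g τ, x⟫ + t * r x = t * (r x + ⟪runningAverage g t, x⟫) := by
    intro x
    rw [← sum_inner, ← natCast_smul_runningAverage, real_inner_smul_left]
    ring
  have hle := isMinOn_iff.1 (hw.isMinOn_succ t ht) u hu
  simp only [hobj] at hle
  exact le_of_mul_le_mul_left hle (by exact_mod_cast ht)

lemma mul_norm_sub_succ_le (hw : IsRDASequence C r g w) (hr : StrongConvexOn C α r)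
    (hg : ∀ τ, ‖g τ‖ ≤ L) (t : ℕ) :
    α * ‖w (t + 1) - w (t + 2)‖ ≤ 2 * L / (t + 1) :=
  calc α * ‖w (t + 1) - w (t + 2)‖
      ≤ ‖runningAverage g t - runningAverage g (t + 1)‖ :=
        hr.mul_norm_sub_le_of_isMinOn_add_inner (hw.mem _) (hw.mem _)
          (hw.isMinOn_add_inner_runningAverage t) (hw.isMinOn_add_inner_runningAverage (t + 1))
    _ = ‖runningAverage g (t + 1) - runningAverage g t‖ := norm_sub_rev _ _
    _ ≤ 2 * L / (t + 1) := norm_runningAverage_succ_sub_le hg t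

lemma sum_norm_sub_succ_le (hw : IsRDASequence C r g w) (hr : StrongConvexOn C α r)
    (hα : 0 < α) (hg : ∀ τ, ‖g τ‖ ≤ L) (T : ℕ) :
    ∑ t ∈ Icc 1 T, ‖w t - w (t + 1)‖ ≤ 2 * L / α * (1 + Real.log T) := by
  have hL : 0 ≤ L := (norm_nonneg _).trans (hg 0)
  calc ∑ t ∈ Icc 1 T, ‖w t - w (t + 1)‖ ≤ ∑ t ∈ Icc 1 T, 2 * L / α * (t : ℝ)⁻¹ := by
        refine sum_le_sum fun t ht => ?_
        obtain ⟨s, rfl⟩ : ∃ s, t = s + 1 := ⟨t - 1, by grind⟩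
        have hstep := (le_div_iff₀ (by positivity)).1 (hw.mul_norm_sub_succ_le hr hg s)
        rw [← div_eq_mul_inv, div_div, le_div_iff₀ (by positivity)]
        push_cast
        linarith
    _ = 2 * L / α * harmonic T := by
        rw [← mul_sum, harmonic_eq_sum_Icc]
        push_cast
        rfl
    _ ≤ 2 * L / α * (1 + Real.log T) :=
        mul_le_mul_of_nonneg_left (harmonic_le_one_add_log T) (by positivity)

lemma regret_le (hw : IsRDASequence C r g w) (hg : ∀ τ, ‖g τ‖ ≤ L) (T : ℕ) {u : E}
    (hu : u ∈ C) :
    ∑ t ∈ Icc 1 T, (⟪g t, w t - u⟫ + r (w t) - r u) ≤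
      L * ∑ t ∈ Icc 1 T, ‖w t - w (t + 1)‖ := by
  have hbtl := sum_apply_succ_le_sum_apply_of_isMinOn (f := fun t x => ⟪g t, x⟫ + r x)
    hw.mem (fun t ht => by simpa [sum_add_distrib] using hw.isMinOn_succ t ht) T hu
  have htele : ∑ t ∈ Icc 1 T, (r (w (t + 1)) - r (w t)) = r (w (T + 1)) - r (w 1) := by
    rw [← Ico_add_one_right_eq_Icc, sum_Ico_sub (fun t => r (w t)) (by omega)]
  have hr1 := isMinOn_iff.1 hw.isMinOn_one _ (hw.mem (T + 1))
  have hinner : ∑ t ∈ Icc 1 T, ⟪g t, w t - w (t + 1)⟫ ≤ L * ∑ t ∈ Icc 1 T, ‖w t - w (t + 1)‖ := by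
    rw [mul_sum]
    exact sum_le_sum fun t _ => (real_inner_le_norm _ _).trans
      (mul_le_mul_of_nonneg_right (hg t) (norm_nonneg _))
  have hsplit : ∑ t ∈ Icc 1 T, (⟪g t, w t - u⟫ + r (w t) - r u) =
      ∑ t ∈ Icc 1 T, ⟪g t, w t - w (t + 1)⟫ - ∑ t ∈ Icc 1 T, (r (w (t + 1)) - r (w t)) +
        (∑ t ∈ Icc 1 T, (⟪g t, w (t + 1)⟫ + r (w (t + 1))) - ∑ t ∈ Icc 1 T, (⟪g t, u⟫ + r u)) := by
    simp only [← sum_sub_distrib, ← sum_add_distrib, inner_sub_right]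
    exact sum_congr rfl fun t _ => by ring
  rw [hsplit, htele]
  linarith

end IsRDASequence

end RDA

theorem stmt_11_general {d : ℕ} (C : Set (EuclideanSpace ℝ (Fin d)))
    (α L : ℝ) (hα : 0 < α) (T : ℕ)
    (r : EuclideanSpace ℝ (Fin d) → ℝ) (hr : StrongConvexOn C α r)
    (g : ℕ → EuclideanSpace ℝ (Fin d)) (hg : ∀ τ, ‖g τ‖ ≤ L)
    (w : ℕ → EuclideanSpace ℝ (Fin d)) (hw : ∀ t, w t ∈ C)
    (hw1 : ∀ u ∈ C, r (w 1) ≤ r u)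
    (hmin : ∀ t, 1 ≤ t → ∀ u ∈ C,
      (∑ τ ∈ Finset.Icc 1 t, (inner ℝ (g τ) (w (t + 1)) : ℝ)) + (t : ℝ) * r (w (t + 1)) ≤
        (∑ τ ∈ Finset.Icc 1 t, (inner ℝ (g τ) u : ℝ)) + (t : ℝ) * r u)
    (wstar : EuclideanSpace ℝ (Fin d)) (hwstar : wstar ∈ C) :
    ∑ t ∈ Finset.Icc 1 T, ‖w t - w (t + 1)‖ ≤ 2 * L / α * (1 + Real.log T) ∧
      ∑ t ∈ Finset.Icc 1 T, ((inner ℝ (g t) (w t - wstar) : ℝ) + r (w t) - r wstar) ≤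
        2 * L ^ 2 / α * (1 + Real.log T) := by
  have hrda : IsRDASequence C r g w :=
    ⟨hw, isMinOn_iff.2 hw1, fun t ht => isMinOn_iff.2 (hmin t ht)⟩
  have hstab := hrda.sum_norm_sub_succ_le hr hα hg T
  refine ⟨hstab, (hrda.regret_le hg T hwstar).trans ?_⟩
  calc L * ∑ t ∈ Icc 1 T, ‖w t - w (t + 1)‖ ≤ L * (2 * L / α * (1 + Real.log T)) :=
        mul_le_mul_of_nonneg_left hstab ((norm_nonneg _).trans (hg 0))
    _ = 2 * L ^ 2 / α * (1 + Real.log T) := by ring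

/-- RDA (β_t = 0) with strongly convex regularizer: cumulative stability bound
(2L/α)(1 + ln T) and regret bound (2L²/α)(1 + ln T). -/
theorem stmt_11 {d : ℕ} (C : Set (EuclideanSpace ℝ (Fin d)))
    (hC : Convex ℝ C) (hCcpt : IsCompact C)
    (α L : ℝ) (hα : 0 < α) (hL : 0 ≤ L) (T : ℕ) (hT : 1 ≤ T)
    (r : EuclideanSpace ℝ (Fin d) → ℝ) (hr : StrongConvexOn C α r)
    (g : ℕ → EuclideanSpace ℝ (Fin d)) (hg : ∀ τ, ‖g τ‖ ≤ L)
    (w : ℕ → EuclideanSpace ℝ (Fin d)) (hw : ∀ t, w t ∈ C)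
    (hw1 : ∀ u ∈ C, r (w 1) ≤ r u)
    (hmin : ∀ t, 1 ≤ t → ∀ u ∈ C,
      (∑ τ ∈ Finset.Icc 1 t, (inner ℝ (g τ) (w (t + 1)) : ℝ)) + (t : ℝ) * r (w (t + 1)) ≤
        (∑ τ ∈ Finset.Icc 1 t, (inner ℝ (g τ) u : ℝ)) + (t : ℝ) * r u)
    (wstar : EuclideanSpace ℝ (Fin d)) (hwstar : wstar ∈ C)
    (hstar : ∀ u ∈ C,
      ∑ t ∈ Finset.Icc 1 T, ((inner ℝ (g t) wstar : ℝ) + r wstar) ≤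
        ∑ t ∈ Finset.Icc 1 T, ((inner ℝ (g t) u : ℝ) + r u)) :
    ∑ t ∈ Finset.Icc 1 T, ‖w t - w (t + 1)‖ ≤ 2 * L / α * (1 + Real.log T) ∧
      ∑ t ∈ Finset.Icc 1 T, ((inner ℝ (g t) (w t - wstar) : ℝ) + r (w t) - r wstar) ≤
        2 * L ^ 2 / α * (1 + Real.log T) :=
  stmt_11_general C α L hα T r hr g hg w hw hw1 hmin wstar hwstar
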